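/- arXiv:2209.05932 — 6 statements merged into one kernel-verified Lean document; each statement's English description precedes it below -/
import Mathlib

section
/- Let n >= 2 be an integer and t a complex number. In the polynomial (X - n*t)*(X + t)^n in C[X], the coefficient of X^{n+1} equals 1, the coefficient of X^n equals 0, and for each integer k with 0 <= k <= n-1 the coefficient of X^k equals a_k * t^{n+1-k}, where a_k = binom(n, k-1) - n*binom(n, k) (with the convention binom(n,-1) = 0) satisfies a_k < 0. In particular, for t different from 0, all coefficients of X^k with 0 <= k <= n-1 are nonzero. -/
open Polynomial

lemma choose_lt_aux (n j : ℕ) (h : j + 1 ≤ n - 1) (hn : 2 ≤ n) :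
    n.choose j < n * n.choose (j + 1) := by
  have hid : n.choose (j + 1) * (j + 1) = n.choose j * (n - j) := Nat.choose_succ_right_eq n j
  have hpos : 0 < n.choose (j + 1) := Nat.choose_pos (by omega)
  have h2 : 2 ≤ n - j := by omega
  have h3 : n.choose j * 2 ≤ n.choose j * (n - j) := Nat.mul_le_mul_left _ h2
  have h4 : n.choose (j + 1) * (j + 1) ≤ n.choose (j + 1) * (n - 1) :=
    Nat.mul_le_mul_left _ (by omega)
  have h5 : n.choose (j + 1) * (n - 1) < n.choose (j + 1) * n :=
    Nat.mul_lt_mul_of_le_of_lt (le_refl _) (by omega) hpos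
  calc n.choose j ≤ n.choose j * 2 := by omega
    _ ≤ n.choose j * (n - j) := h3
    _ = n.choose (j + 1) * (j + 1) := hid.symm
    _ ≤ n.choose (j + 1) * (n - 1) := h4
    _ < n.choose (j + 1) * n := h5
    _ = n * n.choose (j + 1) := Nat.mul_comm _ _

/-- Coefficients of `(X - n t)(X + t)^n`: the polynomial is monic of degree `n + 1`, the
coefficient of `X^n` vanishes, and for `0 ≤ k ≤ n - 1` the coefficient of `X^k` equals
`a_k t^{n+1-k}` where `a_k = binom(n, k-1) - n binom(n, k)` (with `binom(n, -1) = 0`) is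
negative; in particular for `t ≠ 0` all these coefficients are nonzero. -/
theorem coeffs_of_A_n_minus_one_stratum (n : ℕ) (hn : 2 ≤ n) (t : ℂ) :
    ((X - C ((n : ℂ) * t)) * (X + C t) ^ n).coeff (n + 1) = 1 ∧
    ((X - C ((n : ℂ) * t)) * (X + C t) ^ n).coeff n = 0 ∧
    (∀ k : ℕ, k ≤ n - 1 →
      ((X - C ((n : ℂ) * t)) * (X + C t) ^ n).coeff k =
        ((((if k = 0 then 0 else (n.choose (k - 1) : ℤ)) - (n : ℤ) * (n.choose k : ℤ)) : ℤ) : ℂ)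
          * t ^ (n + 1 - k) ∧
      (((if k = 0 then 0 else (n.choose (k - 1) : ℤ)) - (n : ℤ) * (n.choose k : ℤ)) : ℤ) < 0) ∧
    (t ≠ 0 → ∀ k : ℕ, k ≤ n - 1 →
      ((X - C ((n : ℂ) * t)) * (X + C t) ^ n).coeff k ≠ 0) := by
  set p : ℂ[X] := (X + C t) ^ n with hp
  have hpc : ∀ k, p.coeff k = t ^ (n - k) * (n.choose k : ℂ) := fun k => coeff_X_add_C_pow t n k
  have hsucc : ∀ k : ℕ, ((X - C ((n : ℂ) * t)) * p).coeff (k + 1)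
      = p.coeff k - (n : ℂ) * t * p.coeff (k + 1) := by
    intro k
    rw [sub_mul, coeff_sub, coeff_X_mul, coeff_C_mul]
  have h0 : ((X - C ((n : ℂ) * t)) * p).coeff 0 = -((n : ℂ) * t * p.coeff 0) := by
    rw [sub_mul, coeff_sub, coeff_C_mul, mul_coeff_zero, coeff_X_zero, zero_mul, zero_sub]
  have htop : ((X - C ((n : ℂ) * t)) * p).coeff (n + 1) = 1 := by
    rw [hsucc, hpc, hpc, Nat.choose_self, Nat.choose_succ_self, Nat.sub_self]
    simp
  have hmain : ∀ k : ℕ, k ≤ n - 1 →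
      ((X - C ((n : ℂ) * t)) * p).coeff k =
        ((((if k = 0 then 0 else (n.choose (k - 1) : ℤ)) - (n : ℤ) * (n.choose k : ℤ)) : ℤ) : ℂ)
          * t ^ (n + 1 - k) ∧
      (((if k = 0 then 0 else (n.choose (k - 1) : ℤ)) - (n : ℤ) * (n.choose k : ℤ)) : ℤ) < 0 := by
    intro k hk
    constructor
    · rcases k with _ | j
      · rw [h0, hpc]
        simp only [Nat.choose_zero_right, Nat.sub_zero, if_pos rfl]
        push_cast
        ring
      · rw [hsucc, hpc, hpc]
        simp only [Nat.succ_sub_one, if_neg (Nat.succ_ne_zero j)]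
        rw [show n + 1 - (j + 1) = n - j from by omega,
          show n - j = (n - (j + 1)) + 1 from by omega, pow_succ]
        push_cast
        ring
    · rcases k with _ | j
      · have h2 : (2 : ℤ) ≤ (n : ℤ) := by exact_mod_cast hn
        simp only [reduceIte, Nat.choose_zero_right, Nat.cast_one, mul_one]
        omega
      · simp only [Nat.succ_sub_one, if_neg (Nat.succ_ne_zero j)]
        have := choose_lt_aux n j hk hn
        zify at this
        omega
  refine ⟨htop, ?_, hmain, ?_⟩
  · obtain ⟨m, rfl⟩ : ∃ m, n = m + 1 := ⟨n - 1, by omega⟩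
    rw [hsucc, hpc, hpc, Nat.choose_self, Nat.choose_succ_self_right, Nat.sub_self]
    simp only [Nat.succ_sub_one, Nat.sub_self, pow_zero]
    rw [show m + 1 - m = 1 from by omega]
    push_cast
    ring
  · intro ht k hk
    obtain ⟨heq, hlt⟩ := hmain k hk
    rw [heq]
    apply mul_ne_zero
    · exact_mod_cast hlt.ne
    · exact pow_ne_zero _ ht
end

section
/- Let i, j be integers with 1 <= i <= j, set n = i + j + 1, p = i + 1, q = j + 1, and let t be a complex number. In the polynomial (X - q*t)^p * (X + p*t)^q in C[X], the coefficient of X^{n+1} equals 1, the coefficient of X^n equals 0, the coefficient of X^{n-1} equals -(p*q*(p+q)/2) * t^2 (which is nonzero whenever t is nonzero), and the coefficient of X^{n-2} equals -(p*q*(q-p)*(p+q)/3) * t^3, which for t nonzero is nonzero if and only if i < j. -/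
open Polynomial

private lemma ch2 (n : ℕ) : 2 * (n+1).choose 2 = (n+1) * n := by
  induction n with
  | zero => rfl
  | succ k ih =>
    rw [Nat.choose_succ_succ (k+1) 1, Nat.choose_one_right, Nat.mul_add, ih]; ring

private lemma c2 (n : ℕ) : ((n+1).choose 2 : ℂ) = ((n:ℂ)+1)*n/2 := by
  have := ch2 n
  have : ((2 * (n+1).choose 2 : ℕ) : ℂ) = (((n+1) * n : ℕ) : ℂ) := by rw [this]
  push_cast at this
  field_simp
  linear_combination this

private lemma ch3 (n : ℕ) : 6 * (n+2).choose 3 = (n+2)*(n+1)*n := by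
  induction n with
  | zero => decide
  | succ k ih =>
    rw [Nat.choose_succ_succ (k+2) 2, Nat.mul_add, ih]
    have h2 := ch2 (k+1)
    nlinarith [h2]

private lemma c3 (n : ℕ) : ((n+1).choose 3 : ℂ) = ((n:ℂ)+1)*n*((n:ℂ)-1)/6 := by
  cases n with
  | zero => simp [Nat.choose]
  | succ k =>
    have := ch3 k
    have : ((6 * (k+2).choose 3 : ℕ) : ℂ) = (((k+2)*(k+1)*k : ℕ) : ℂ) := by rw [this]
    push_cast at this ⊢
    field_simp
    linear_combination this

private lemma revlin (c : ℂ) : (X + C c).reverse = C c * X + 1 := by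
  rw [Polynomial.reverse, natDegree_X_add_C, reflect_add, reflect_C,
    (by simpa using reflect_monomial 1 1 (R := ℂ) : reflect 1 (X : ℂ[X]) = 1)]
  ring

private lemma revpow (u : ℂ[X]) (n : ℕ) : (u ^ n).reverse = u.reverse ^ n := by
  induction n with
  | zero => simp [Polynomial.reverse]
  | succ k ih => rw [pow_succ, reverse_mul_of_domain, ih, pow_succ]

private lemma coeffB {c : ℂ} (hc : c ≠ 0) (k m : ℕ) :
    ((C c * X + 1) ^ k).coeff m = c ^ m * k.choose m := by
  have h : (C c * X + 1 : ℂ[X]) = C c * (X + C c⁻¹) := by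
    rw [mul_add, ← C_mul, mul_inv_cancel₀ hc, C_1]
  rw [h, mul_pow, ← C_pow, coeff_C_mul, coeff_X_add_C_pow]
  rcases le_or_gt m k with hmk | hmk
  · rw [← mul_assoc]
    congr 1
    rw [inv_pow, ← pow_sub₀ c hc (Nat.sub_le k m), Nat.sub_sub_self hmk]
  · rw [Nat.choose_eq_zero_of_lt hmk]; push_cast; ring

/-- Coefficients of `(X - q t)^p (X + p t)^q` with `p = i + 1`, `q = j + 1`,
`n = i + j + 1` (so `p + q = n + 1`): the polynomial is monic of degree `n + 1`, the
coefficient of `X^n` vanishes, the coefficient of `X^{n-1}` is `-(pq(p+q)/2) t²`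
(nonzero for `t ≠ 0`), and the coefficient of `X^{n-2}` is `-(pq(q-p)(p+q)/3) t³`,
which for `t ≠ 0` is nonzero iff `i < j`. -/
theorem coeffs_of_A_i_A_j_stratum (i j : ℕ) (hi : 1 ≤ i) (hij : i ≤ j) (t : ℂ) :
    ((X - C (((j : ℂ) + 1) * t)) ^ (i + 1) * (X + C (((i : ℂ) + 1) * t)) ^ (j + 1)).coeff
        ((i + j + 1) + 1) = 1 ∧
    ((X - C (((j : ℂ) + 1) * t)) ^ (i + 1) * (X + C (((i : ℂ) + 1) * t)) ^ (j + 1)).coeff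
        (i + j + 1) = 0 ∧
    ((X - C (((j : ℂ) + 1) * t)) ^ (i + 1) * (X + C (((i : ℂ) + 1) * t)) ^ (j + 1)).coeff
        (i + j) =
      -((((i : ℂ) + 1) * ((j : ℂ) + 1) * (((i : ℂ) + 1) + ((j : ℂ) + 1))) / 2) * t ^ 2 ∧
    (t ≠ 0 →
      -((((i : ℂ) + 1) * ((j : ℂ) + 1) * (((i : ℂ) + 1) + ((j : ℂ) + 1))) / 2) * t ^ 2 ≠ 0) ∧
    ((X - C (((j : ℂ) + 1) * t)) ^ (i + 1) * (X + C (((i : ℂ) + 1) * t)) ^ (j + 1)).coeff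
        (i + j - 1) =
      -((((i : ℂ) + 1) * ((j : ℂ) + 1) * (((j : ℂ) + 1) - ((i : ℂ) + 1)) *
          (((i : ℂ) + 1) + ((j : ℂ) + 1))) / 3) * t ^ 3 ∧
    (t ≠ 0 →
      (-((((i : ℂ) + 1) * ((j : ℂ) + 1) * (((j : ℂ) + 1) - ((i : ℂ) + 1)) *
          (((i : ℂ) + 1) + ((j : ℂ) + 1))) / 3) * t ^ 3 ≠ 0 ↔ i < j)) := by
  have hi1 : ((i : ℂ) + 1) ≠ 0 := by
    have : ((i + 1 : ℕ) : ℂ) ≠ 0 := Nat.cast_ne_zero.2 (Nat.succ_ne_zero i)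
    push_cast at this; exact this
  have hj1 : ((j : ℂ) + 1) ≠ 0 := by
    have : ((j + 1 : ℕ) : ℂ) ≠ 0 := Nat.cast_ne_zero.2 (Nat.succ_ne_zero j)
    push_cast at this; exact this
  by_cases ht : t = 0
  · subst ht
    simp only [mul_zero, C_0, sub_zero, add_zero, ← pow_add]
    rw [coeff_X_pow, coeff_X_pow, coeff_X_pow, coeff_X_pow]
    refine ⟨by rw [if_pos (by omega)], by rw [if_neg (by omega)], ?_, by simp, ?_, by simp⟩
    · rw [if_neg (by omega)]; ring
    · rw [if_neg (by omega)]; ring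
  -- t ≠ 0
  set a : ℂ := -(((j : ℂ) + 1) * t) with ha
  set b : ℂ := ((i : ℂ) + 1) * t with hb
  have haz : a ≠ 0 := neg_ne_zero.2 (mul_ne_zero hj1 ht)
  have hbz : b ≠ 0 := mul_ne_zero hi1 ht
  set P : ℂ[X] := (X + C a) ^ (i + 1) * (X + C b) ^ (j + 1) with hP
  have hPeq : (X - C (((j : ℂ) + 1) * t)) ^ (i + 1) * (X + C (((i : ℂ) + 1) * t)) ^ (j + 1)
      = P := by rw [hP, ha, hb, C_neg, sub_eq_add_neg]
  have hdeg : P.natDegree = i + j + 2 := by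
    rw [hP, Monic.natDegree_mul ((monic_X_add_C a).pow _) ((monic_X_add_C b).pow _),
      natDegree_pow, natDegree_pow, natDegree_X_add_C, natDegree_X_add_C]
    omega
  have hR : P.reverse = (C a * X + 1) ^ (i + 1) * (C b * X + 1) ^ (j + 1) := by
    rw [hP, reverse_mul_of_domain, revpow, revpow, revlin, revlin]
  have key : ∀ m, m ≤ i + j + 2 → P.coeff (i + j + 2 - m)
      = ∑ x ∈ Finset.range (m + 1),
          a ^ x * ((i+1).choose x : ℂ) * (b ^ (m - x) * ((j+1).choose (m - x) : ℂ)) := by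
    intro m hm
    have h1 : P.coeff (i + j + 2 - m) = P.reverse.coeff m := by
      rw [coeff_reverse, hdeg, revAt_le hm]
    rw [h1, hR, coeff_mul, Finset.Nat.sum_antidiagonal_eq_sum_range_succ_mk]
    refine Finset.sum_congr rfl fun x _ => ?_
    rw [coeffB haz, coeffB hbz]
  have k0 := key 0 (by omega)
  have k1 := key 1 (by omega)
  have k2 := key 2 (by omega)
  have k3 := key 3 (by omega)
  simp only [Finset.sum_range_succ, Finset.sum_range_zero, zero_add] at k0 k1 k2 k3
  norm_num [Nat.choose_one_right, c2, c3] at k0 k1 k2 k3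
  rw [hPeq]
  have e0 : (i + j + 1) + 1 = i + j + 2 - 0 := by omega
  have e1 : i + j + 1 = i + j + 2 - 1 := by omega
  have e2 : i + j = i + j + 2 - 2 := by omega
  have e3 : i + j - 1 = i + j + 2 - 3 := by omega
  have hpq : ((i : ℂ) + 1) + ((j : ℂ) + 1) ≠ 0 := by
    have : ((i + j + 2 : ℕ) : ℂ) ≠ 0 := Nat.cast_ne_zero.2 (by omega)
    push_cast at this
    intro h; exact this (by linear_combination h)
  refine ⟨by rw [(by omega : (i + j + 1) + 1 = i + j + 2), k0], ?_, ?_, ?_, ?_, ?_⟩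
  · rw [k1, ha, hb]; ring
  · rw [k2, ha, hb]; ring
  · intro _
    exact mul_ne_zero (neg_ne_zero.2 (div_ne_zero
      (mul_ne_zero (mul_ne_zero hi1 hj1) hpq) two_ne_zero)) (pow_ne_zero _ ht)
  · rw [e3, k3, ha, hb]; ring
  · intro _
    constructor
    · intro hne
      by_contra h
      have : i = j := by omega
      subst this
      exact hne (by ring)
    · intro hlt
      have hd : ((j : ℂ) + 1) - ((i : ℂ) + 1) ≠ 0 := by
        rw [sub_ne_zero]
        intro h
        have : (j : ℂ) = (i : ℂ) := by linear_combination h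
        exact absurd (Nat.cast_inj.1 this) (by omega)
      exact mul_ne_zero (neg_ne_zero.2 (div_ne_zero
        (mul_ne_zero (mul_ne_zero (mul_ne_zero hi1 hj1) hd) hpq) three_ne_zero))
        (pow_ne_zero _ ht)
end

section
/- Let n >= 2 be an even integer and t a nonzero real number. The point (-t, 0) belongs to the real algebraic set Z_t = { (x,y) in R^2 : y^2 + (x - n*t)*(x + t)^n = 0 }, and (-t, 0) is an isolated point of Z_t if and only if t < 0. -/
/-!
Translating by `u = x + t`, the curve is `y² + (u - (n + 1) t) uⁿ = 0`. For `t < 0` the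
factor `u - (n + 1) t` is positive near `u = 0` and `uⁿ ≥ 0` since `n` is even, so both
summands vanish and the point is isolated. For `t ≥ 0` the branch
`δ ↦ (-t - δ, √(((n + 1) t + δ) δⁿ))`, `δ > 0`, lies on the curve and tends to `(-t, 0)`.
-/

open Filter Topology

theorem eq_zero_of_sq_add_mul_pow_eq_zero {n : ℕ} (hn : Even n) {a b y : ℝ} (ha : 0 < a)
    (h : y ^ 2 + a * b ^ n = 0) : b = 0 ∧ y = 0 := by
  have hab : 0 ≤ a * b ^ n := mul_nonneg ha.le (hn.pow_nonneg b)
  obtain ⟨hy, hab⟩ := (add_eq_zero_iff_of_nonneg (sq_nonneg y) hab).mp h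
  exact ⟨eq_zero_of_pow_eq_zero ((mul_eq_zero.mp hab).resolve_left ha.ne'),
    eq_zero_of_pow_eq_zero hy⟩

theorem not_isolated_of_continuousAt {X : Type*} [PseudoMetricSpace X] {S : Set X}
    {γ : ℝ → X} (hγ : ContinuousAt γ 0) (hS : ∀ δ > 0, γ δ ∈ S)
    (hne : ∀ δ > 0, γ δ ≠ γ 0) :
    ¬ ∃ ε > 0, ∀ q ∈ S, dist q (γ 0) < ε → q = γ 0 := by
  rintro ⟨ε, hε, hiso⟩
  have hclose : ∀ᶠ δ in 𝓝[>] 0, dist (γ δ) (γ 0) < ε :=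
    nhdsWithin_le_nhds (Metric.tendsto_nhds.mp hγ ε hε)
  obtain ⟨δ, hδε, hδ⟩ := (hclose.and self_mem_nhdsWithin).exists
  exact hne δ hδ (hiso _ (hS δ hδ) hδε)

def deformationCurve (n : ℕ) (t : ℝ) : Set (ℝ × ℝ) :=
  {p | p.2 ^ 2 + (p.1 - n * t) * (p.1 + t) ^ n = 0}

noncomputable def deformationBranch (n : ℕ) (t δ : ℝ) : ℝ × ℝ :=
  (-t - δ, √(((n + 1) * t + δ) * δ ^ n))

section

variable {n : ℕ} {t : ℝ}

theorem neg_mem_deformationCurve (hn : n ≠ 0) : (-t, 0) ∈ deformationCurve n t := by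
  simp [deformationCurve, hn]

theorem eq_of_mem_deformationCurve_of_dist_lt (hev : Even n) {q : ℝ × ℝ}
    (hq : q ∈ deformationCurve n t) (hdist : dist q (-t, 0) < (n + 1) * -t) :
    q = (-t, 0) := by
  obtain ⟨x, y⟩ := q
  have hx : |x + t| < (n + 1) * -t := by
    rw [Prod.dist_eq, max_lt_iff, Real.dist_eq, sub_neg_eq_add] at hdist
    exact hdist.1
  have hpos : 0 < x - n * t := by linarith [neg_abs_le (x + t)]
  obtain ⟨hxt, rfl⟩ := eq_zero_of_sq_add_mul_pow_eq_zero hev hpos hq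
  rw [show x = -t by linarith]

theorem deformationBranch_mem (hev : Even n) {δ : ℝ} (hδ : 0 ≤ (n + 1) * t + δ) :
    deformationBranch n t δ ∈ deformationCurve n t := by
  simp only [deformationCurve, deformationBranch, Set.mem_ofPred_eq]
  rw [Real.sq_sqrt (mul_nonneg hδ (hev.pow_nonneg δ)), show -t - δ + t = -δ by ring,
    hev.neg_pow]
  ring

theorem deformationBranch_zero (hn : n ≠ 0) : deformationBranch n t 0 = (-t, 0) := by
  simp [deformationBranch, hn]

theorem continuous_deformationBranch : Continuous (deformationBranch n t) := by
  unfold deformationBranch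
  fun_prop

theorem deformationBranch_ne_zero {δ : ℝ} (hδ : δ ≠ 0) :
    deformationBranch n t δ ≠ deformationBranch n t 0 := fun h =>
  hδ (by simpa [deformationBranch] using congrArg Prod.fst h)

end

theorem isolated_point_of_A_n_minus_one_deformation_iff_general
    (n : ℕ) (hn : 2 ≤ n) (hev : Even n) (t : ℝ) :
    ((-t, (0 : ℝ)) ∈ {p : ℝ × ℝ | p.2 ^ 2 + (p.1 - n * t) * (p.1 + t) ^ n = 0}) ∧
    ((∃ ε > 0, ∀ q ∈ {p : ℝ × ℝ | p.2 ^ 2 + (p.1 - n * t) * (p.1 + t) ^ n = 0},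
        dist q (-t, (0 : ℝ)) < ε → q = (-t, (0 : ℝ))) ↔ t < 0) := by
  have hn0 : n ≠ 0 := by omega
  refine ⟨neg_mem_deformationCurve hn0, fun hiso => ?_, fun ht => ?_⟩
  · by_contra! ht
    rw [← deformationBranch_zero hn0] at hiso
    exact not_isolated_of_continuousAt continuous_deformationBranch.continuousAt
      (fun δ hδ => deformationBranch_mem hev (by positivity))
      (fun δ hδ => deformationBranch_ne_zero hδ.ne') hiso
  · exact ⟨(n + 1) * -t, by nlinarith, fun q hq =>
      eq_of_mem_deformationCurve_of_dist_lt hev hq⟩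

/-- In the real deformation `y² + (x - n t)(x + t)ⁿ = 0` of the `A_n` singularity
(`n` even), the point `(-t, 0)` lies on the real algebraic set, and it is an isolated
point of it if and only if `t < 0`. -/
theorem isolated_point_of_A_n_minus_one_deformation_iff
    (n : ℕ) (hn : 2 ≤ n) (hev : Even n) (t : ℝ) (ht : t ≠ 0) :
    ((-t, (0 : ℝ)) ∈ {p : ℝ × ℝ | p.2 ^ 2 + (p.1 - n * t) * (p.1 + t) ^ n = 0}) ∧
    ((∃ ε > 0, ∀ q ∈ {p : ℝ × ℝ | p.2 ^ 2 + (p.1 - n * t) * (p.1 + t) ^ n = 0},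
        dist q (-t, (0 : ℝ)) < ε → q = (-t, (0 : ℝ))) ↔ t < 0) :=
  isolated_point_of_A_n_minus_one_deformation_iff_general n hn hev t
end

section
/- Let k >= 1 be an odd integer, tau > 0 a real number, eps in {1, -1}, and w = sqrt(tau). Then (w, 0) belongs to the real algebraic set Z = { (x,y) in R^2 : y^2 + eps*(x^2 - tau)^{k+1} = 0 }, and (w, 0) is an isolated point of Z if and only if eps = 1. -/
/-!
Write `k + 1 = 2m`. For `ε = 1` the equation is a sum of two squares `y² + ((x² - τ)ᵐ)² = 0`,
so the real set is just `{(±√τ, 0)}` and `(√τ, 0)` is isolated. For `ε = -1` the whole graph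
of the continuous function `x ↦ (x² - τ)ᵐ` lies in the set and passes through `(√τ, 0)`, so
points of the set accumulate there.
-/

open Filter Topology

theorem sq_add_pow_eq_zero_iff {R : Type*} [Ring R] [LinearOrder R] [IsStrictOrderedRing R]
    {n : ℕ} (hn : Even n) (hn0 : n ≠ 0) {y a : R} :
    y ^ 2 + a ^ n = 0 ↔ y = 0 ∧ a = 0 := by
  rw [add_eq_zero_iff_of_nonneg (sq_nonneg y) (hn.pow_nonneg a), sq_eq_zero_iff,
    pow_eq_zero_iff hn0]

theorem eq_sqrt_of_sq_add_pow_eq_zero {n : ℕ} (hn : Even n) (hn0 : n ≠ 0) {tau x y : ℝ}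
    (hx : 0 < x) (h : y ^ 2 + (x ^ 2 - tau) ^ n = 0) : (x, y) = (Real.sqrt tau, 0) := by
  obtain ⟨rfl, hx2⟩ := (sq_add_pow_eq_zero_iff hn hn0).mp h
  rw [← sub_eq_zero.mp hx2, Real.sqrt_sq hx.le]

theorem exists_ne_dist_graph_lt {X Y : Type*} [PseudoMetricSpace X] [PseudoMetricSpace Y]
    {f : X → Y} {a : X} [(𝓝[≠] a).NeBot] (hf : ContinuousAt f a) {ε : ℝ} (hε : 0 < ε) :
    ∃ x ≠ a, dist (x, f x) (a, f a) < ε := by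
  have hgraph : ContinuousAt (fun x => (x, f x)) a := continuousAt_id.prodMk hf
  have hnear : ∀ᶠ x in 𝓝[≠] a, dist (x, f x) (a, f a) < ε :=
    nhdsWithin_le_nhds (hgraph.eventually (Metric.ball_mem_nhds _ hε))
  exact (eventually_mem_nhdsWithin.and hnear).exists

theorem isolated_point_of_two_A_k_stratum_iff_general
    (k : ℕ) (hodd : Odd k) (tau : ℝ) (htau : 0 < tau)
    (eps : ℝ) (heps : eps = 1 ∨ eps = -1) :
    ((Real.sqrt tau, (0 : ℝ)) ∈
        {p : ℝ × ℝ | p.2 ^ 2 + eps * (p.1 ^ 2 - tau) ^ (k + 1) = 0}) ∧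
    ((∃ ε > 0, ∀ q ∈ {p : ℝ × ℝ | p.2 ^ 2 + eps * (p.1 ^ 2 - tau) ^ (k + 1) = 0},
        dist q (Real.sqrt tau, (0 : ℝ)) < ε → q = (Real.sqrt tau, (0 : ℝ))) ↔
      eps = 1) := by
  have hw : 0 < Real.sqrt tau := Real.sqrt_pos.mpr htau
  have hsq : Real.sqrt tau ^ 2 - tau = 0 := by rw [Real.sq_sqrt htau.le, sub_self]
  have heven : Even (k + 1) := hodd.add_one
  obtain ⟨m, hm⟩ := id heven
  refine ⟨by simp [hsq], ⟨fun ⟨ε, hε, hiso⟩ => ?_, ?_⟩⟩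
  · refine heps.resolve_right fun hneg => ?_
    subst hneg
    obtain ⟨x, hxw, hx⟩ := exists_ne_dist_graph_lt (f := fun x : ℝ => (x ^ 2 - tau) ^ m)
      (a := Real.sqrt tau) (by fun_prop) hε
    have hmem : (x, (x ^ 2 - tau) ^ m) ∈
        {p : ℝ × ℝ | p.2 ^ 2 + -1 * (p.1 ^ 2 - tau) ^ (k + 1) = 0} := by
      simp only [Set.mem_ofPred_eq, hm, ← pow_mul, pow_add]
      ring
    have hm0 : m ≠ 0 := by omega
    exact hxw (congrArg Prod.fst (hiso _ hmem (by simpa [hsq, hm0] using hx)))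
  · rintro rfl
    refine ⟨Real.sqrt tau, hw, fun q hq hdist => ?_⟩
    have hq1 : 0 < q.1 := by
      rw [Prod.dist_eq, max_lt_iff, Real.dist_eq, abs_lt] at hdist
      linarith [hdist.1.1]
    rw [Set.mem_ofPred_eq, one_mul] at hq
    exact eq_sqrt_of_sq_add_pow_eq_zero heven (by omega) hq1 hq

/-- For the deformation `y² + ε (x² - τ)^{k+1} = 0` (`k` odd, `τ > 0`, `ε = ±1`) of the
real `A_{2k+1}` singularity, the point `(√τ, 0)` lies on the real algebraic set, and it
is an isolated point of it if and only if `ε = 1`. -/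
theorem isolated_point_of_two_A_k_stratum_iff
    (k : ℕ) (hk : 1 ≤ k) (hodd : Odd k) (tau : ℝ) (htau : 0 < tau)
    (eps : ℝ) (heps : eps = 1 ∨ eps = -1) :
    ((Real.sqrt tau, (0 : ℝ)) ∈
        {p : ℝ × ℝ | p.2 ^ 2 + eps * (p.1 ^ 2 - tau) ^ (k + 1) = 0}) ∧
    ((∃ ε > 0, ∀ q ∈ {p : ℝ × ℝ | p.2 ^ 2 + eps * (p.1 ^ 2 - tau) ^ (k + 1) = 0},
        dist q (Real.sqrt tau, (0 : ℝ)) < ε → q = (Real.sqrt tau, (0 : ℝ))) ↔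
      eps = 1) :=
  isolated_point_of_two_A_k_stratum_iff_general k hodd tau htau eps heps
end

section
/- Let t be a nonzero real number. The origin (0,0) belongs to the real algebraic set Z_t = { (x,y) in R^2 : y^3 + (x^2 + t*y)^2 = 0 }, and (0,0) is an isolated point of Z_t if and only if t < 0. -/
/-- In the family `y³ + (x² + t y)² = 0` (realizing the stratum `Σ(A₅|E₆)` in the versal
deformation of `y³ + x⁴ = 0`), the origin lies on the real algebraic set, and it is an
isolated point of it if and only if `t < 0`. -/
theorem isolated_point_of_A5_stratum_iff (t : ℝ) (ht : t ≠ 0) :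
    (((0 : ℝ), (0 : ℝ)) ∈ {p : ℝ × ℝ | p.2 ^ 3 + (p.1 ^ 2 + t * p.2) ^ 2 = 0}) ∧
    ((∃ ε > 0, ∀ q ∈ {p : ℝ × ℝ | p.2 ^ 3 + (p.1 ^ 2 + t * p.2) ^ 2 = 0},
        dist q ((0 : ℝ), (0 : ℝ)) < ε → q = ((0 : ℝ), (0 : ℝ))) ↔ t < 0) := by
  constructor
  · show (0:ℝ)^3 + ((0:ℝ)^2 + t*0)^2 = 0
    ring
  constructor
  · rintro ⟨ε, hε, hiso⟩
    by_contra hlt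
    have ht' : 0 < t := lt_of_le_of_ne (not_lt.mp hlt) (Ne.symm ht)
    set r : ℝ := min (t/2) (min (ε/(t+1)) ε) with hrdef
    have hr0 : 0 < r := lt_min (by linarith) (lt_min (by positivity) hε)
    have hrt : r ≤ t/2 := min_le_left _ _
    have hr1 : r ≤ ε/(t+1) := le_trans (min_le_right _ _) (min_le_left _ _)
    have hr2 : r ≤ ε := le_trans (min_le_right _ _) (min_le_right _ _)
    have hr1' : r * (t+1) ≤ ε := by
      rw [← le_div_iff₀ (by linarith : (0:ℝ) < t+1)]; exact hr1
    have hnn : 0 ≤ t*r^2 - r^3 := by nlinarith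
    set x : ℝ := Real.sqrt (t*r^2 - r^3) with hxdef
    have hx2 : x^2 = t*r^2 - r^3 := Real.sq_sqrt hnn
    have hmem : (x, -r^2) ∈ {p : ℝ × ℝ | p.2 ^ 3 + (p.1 ^ 2 + t * p.2) ^ 2 = 0} := by
      show (-r^2)^3 + (x^2 + t*(-r^2))^2 = 0
      rw [hx2]; ring
    have hdist : dist (x, -r^2) ((0:ℝ), (0:ℝ)) < ε := by
      rw [Prod.dist_eq]
      apply max_lt
      · simp only [Real.dist_eq, sub_zero]
        rw [abs_of_nonneg (Real.sqrt_nonneg _)]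
        rw [Real.sqrt_lt' hε]
        nlinarith
      · simp only [Real.dist_eq, sub_zero]
        rw [abs_of_nonpos (by nlinarith : -r^2 ≤ 0)]
        nlinarith
    have := hiso (x, -r^2) hmem hdist
    have h2 : -r^2 = (0:ℝ) := congrArg Prod.snd this
    nlinarith
  · intro htneg
    refine ⟨min 1 (t^2), lt_min one_pos (by positivity), ?_⟩
    rintro ⟨x, y⟩ hq hd
    have heq : y^3 + (x^2 + t*y)^2 = 0 := hq
    have hdy : |y| < t^2 := by
      have h1 : |y| ≤ dist ((x,y) : ℝ × ℝ) ((0:ℝ),(0:ℝ)) := by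
        rw [Prod.dist_eq]
        simp only [Real.dist_eq, sub_zero]
        exact le_max_right _ _
      have := lt_of_le_of_lt h1 hd
      exact lt_of_lt_of_le this (min_le_right _ _)
    have hy0 : y ≤ 0 := by
      by_contra h
      push_neg at h
      nlinarith [sq_nonneg (x^2 + t*y), mul_pos (mul_pos h h) h]
    have hy : y = 0 := by
      by_contra h
      have hylt : y < 0 := lt_of_le_of_ne hy0 h
      have h2 : 0 < t*y := mul_pos_of_neg_of_neg htneg hylt
      have h3 : (t*y)^2 ≤ (x^2 + t*y)^2 := by nlinarith [sq_nonneg x]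
      have h4 : -y < t^2 := by rw [abs_of_neg hylt] at hdy; exact hdy
      nlinarith [sq_nonneg y, mul_pos (mul_pos (neg_pos.mpr hylt) (neg_pos.mpr hylt)) (neg_pos.mpr hylt)]
    have hx : x = 0 := by
      rw [hy] at heq
      have : x^4 = 0 := by nlinarith
      exact pow_eq_zero_iff (n := 4) (by norm_num) |>.mp this
    simp [hx, hy]
end

section
/- Let u and v be positive real numbers. Then there is exactly one smooth real conic that is tangent to each of the three coordinate lines X = 0, Y = 0 and Z = 0 of the projective plane and passes through the two points [u : 0 : 1] and [0 : v : 1]. -/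
/-!
A conic tangent to the line `Y = 0` and passing through the point `[u:0:1]` of that line must
touch it there, which determines `c₄` and `c₂` in terms of `c₀`; likewise on `X = 0`. Up to
scaling, tangency to `Z = 0` then leaves only two candidates: `(vX + uY - uvZ)² - 4uvXY` and the
double line `(vX + uY - uvZ)²`, and the latter is not smooth.
-/

noncomputable section

/-- The value of the quadratic form `Q = c₀X² + c₁Y² + c₂Z² + c₃XY + c₄XZ + c₅YZ`. -/
def Qval (c : Fin 6 → ℝ) (x y z : ℝ) : ℝ :=
  c 0 * x ^ 2 + c 1 * y ^ 2 + c 2 * z ^ 2 + c 3 * (x * y) + c 4 * (x * z) + c 5 * (y * z)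

/-- The symmetric matrix of the quadratic form `Q`. -/
def symMat (c : Fin 6 → ℝ) : Matrix (Fin 3) (Fin 3) ℝ :=
  !![c 0, c 3 / 2, c 4 / 2; c 3 / 2, c 1, c 5 / 2; c 4 / 2, c 5 / 2, c 2]

/-- The conic `{Q = 0}` is smooth (nondegenerate). -/
def SmoothConic (c : Fin 6 → ℝ) : Prop := (symMat c).det ≠ 0

/-- Tangency to the coordinate line `X = 0` (parametrized by `[0:s:u]`): the restricted
binary quadratic form is nonzero with vanishing discriminant. -/
def TangentX (c : Fin 6 → ℝ) : Prop :=
  ¬ (c 1 = 0 ∧ c 2 = 0 ∧ c 5 = 0) ∧ (c 5) ^ 2 - 4 * c 1 * c 2 = 0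

/-- Tangency to the coordinate line `Y = 0` (parametrized by `[s:0:u]`). -/
def TangentY (c : Fin 6 → ℝ) : Prop :=
  ¬ (c 0 = 0 ∧ c 2 = 0 ∧ c 4 = 0) ∧ (c 4) ^ 2 - 4 * c 0 * c 2 = 0

/-- Tangency to the coordinate line `Z = 0` (parametrized by `[s:u:0]`). -/
def TangentZ (c : Fin 6 → ℝ) : Prop :=
  ¬ (c 0 = 0 ∧ c 1 = 0 ∧ c 3 = 0) ∧ (c 3) ^ 2 - 4 * c 0 * c 1 = 0

theorem coeffs_eq_of_discrim_eq_zero_of_root {R : Type*} [CommRing R] [NoZeroDivisors R]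
    {a b c x : R} (hd : discrim a b c = 0) (hx : a * (x * x) + b * x + c = 0) :
    b = -(2 * a * x) ∧ c = a * x ^ 2 := by
  have hb : 2 * a * x + b = 0 :=
    pow_eq_zero_iff two_ne_zero |>.mp (hd ▸ discrim_eq_sq_of_quadratic_eq_zero hx).symm
  exact ⟨by linear_combination hb, by linear_combination hx - x * hb⟩

theorem TangentY.coeffs_eq_of_Qval_eq_zero {c : Fin 6 → ℝ} {x : ℝ} (hT : TangentY c)
    (hQ : Qval c x 0 1 = 0) : c 4 = -(2 * c 0 * x) ∧ c 2 = c 0 * x ^ 2 :=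
  coeffs_eq_of_discrim_eq_zero_of_root (by rw [discrim]; linear_combination hT.2)
    (by rw [Qval] at hQ; linear_combination hQ)

theorem TangentX.coeffs_eq_of_Qval_eq_zero {c : Fin 6 → ℝ} {y : ℝ} (hT : TangentX c)
    (hQ : Qval c 0 y 1 = 0) : c 5 = -(2 * c 1 * y) ∧ c 2 = c 1 * y ^ 2 :=
  coeffs_eq_of_discrim_eq_zero_of_root (by rw [discrim]; linear_combination hT.2)
    (by rw [Qval] at hQ; linear_combination hQ)

theorem det_symMat (c : Fin 6 → ℝ) :
    (symMat c).det = c 0 * c 1 * c 2 + c 3 * c 4 * c 5 / 4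
      - (c 0 * c 5 ^ 2 + c 1 * c 4 ^ 2 + c 2 * c 3 ^ 2) / 4 := by
  rw [symMat, Matrix.det_fin_three]
  simp only [Matrix.of_apply, Matrix.cons_val', Matrix.cons_val_zero, Matrix.cons_val_one,
    Matrix.cons_val_two, Matrix.empty_val', Matrix.cons_val_fin_one, Matrix.head_cons,
    Matrix.tail_cons, Matrix.head_fin_const]
  ring

/-- The coefficients of `(vX + uY - uvZ)² - 4uvXY`. -/
def inscribedConic (u v : ℝ) : Fin 6 → ℝ :=
  ![v ^ 2, u ^ 2, u ^ 2 * v ^ 2, -(2 * u * v), -(2 * u * v ^ 2), -(2 * u ^ 2 * v)]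

/-- The coefficients of `(vX + uY - uvZ)²`. -/
def doubleLine (u v : ℝ) : Fin 6 → ℝ :=
  ![v ^ 2, u ^ 2, u ^ 2 * v ^ 2, 2 * u * v, -(2 * u * v ^ 2), -(2 * u ^ 2 * v)]

def IsInscribedConicThrough (u v : ℝ) (c : Fin 6 → ℝ) : Prop :=
  c ≠ 0 ∧ SmoothConic c ∧ TangentX c ∧ TangentY c ∧ TangentZ c ∧
    Qval c u 0 1 = 0 ∧ Qval c 0 v 1 = 0

theorem not_smoothConic_smul_doubleLine (r u v : ℝ) : ¬ SmoothConic (r • doubleLine u v) := by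
  rw [SmoothConic, det_symMat, not_not]
  simp only [doubleLine, Pi.smul_apply, smul_eq_mul, Matrix.cons_val_zero, Matrix.cons_val_one,
    Matrix.cons_val]
  ring

theorem isInscribedConicThrough_inscribedConic {u v : ℝ} (hu : u ≠ 0) (hv : v ≠ 0) :
    IsInscribedConicThrough u v (inscribedConic u v) := by
  have hu2 : u ^ 2 ≠ 0 := pow_ne_zero 2 hu
  have hv2 : v ^ 2 ≠ 0 := pow_ne_zero 2 hv
  have hdet : (symMat (inscribedConic u v)).det = -(4 * u ^ 4 * v ^ 4) := by
    simp only [det_symMat, inscribedConic, Matrix.cons_val_zero, Matrix.cons_val_one,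
      Matrix.cons_val]
    ring
  refine ⟨fun h => hv2 (congrFun h 0), ?_, ⟨fun h => hu2 h.1, ?_⟩, ⟨fun h => hv2 h.1, ?_⟩,
    ⟨fun h => hv2 h.1, ?_⟩, ?_, ?_⟩
  · rw [SmoothConic, hdet]
    exact neg_ne_zero.2 (by positivity)
  all_goals
    simp only [Qval, inscribedConic, Matrix.cons_val_zero, Matrix.cons_val_one, Matrix.cons_val]
    ring

theorem eq_smul_inscribedConic_or_doubleLine {u v : ℝ} (hv : v ≠ 0) {c : Fin 6 → ℝ}
    (hX : TangentX c) (hY : TangentY c) (hZ : TangentZ c)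
    (hQu : Qval c u 0 1 = 0) (hQv : Qval c 0 v 1 = 0) :
    ∃ r : ℝ, c = r • inscribedConic u v ∨ c = r • doubleLine u v := by
  obtain ⟨h4, h2⟩ := hY.coeffs_eq_of_Qval_eq_zero hQu
  obtain ⟨h5, h2'⟩ := hX.coeffs_eq_of_Qval_eq_zero hQv
  set r := c 0 / v ^ 2
  have hv2 : v ^ 2 ≠ 0 := pow_ne_zero 2 hv
  have h0 : c 0 = r * v ^ 2 := (div_mul_cancel₀ _ hv2).symm
  have h1 : c 1 = r * u ^ 2 :=
    mul_right_cancel₀ hv2 (by linear_combination u ^ 2 * h0 + h2 - h2')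
  have h3 : c 3 = 2 * r * u * v ∨ c 3 = -(2 * r * u * v) := sq_eq_sq_iff_eq_or_eq_neg.1 <| by
    linear_combination hZ.2 + 4 * r * u ^ 2 * h0 + 4 * c 0 * h1
  refine ⟨r, h3.symm.imp (fun h3 => ?_) (fun h3 => ?_)⟩ <;>
  · ext i
    fin_cases i <;>
      simp only [Fin.zero_eta, Fin.mk_one, Fin.reduceFinMk, Pi.smul_apply, smul_eq_mul,
        inscribedConic, doubleLine, Matrix.cons_val_zero, Matrix.cons_val_one, Matrix.cons_val,
        h0, h1, h2, h3, h4, h5] <;>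
      ring

/-- There is exactly one smooth real conic tangent to the three coordinate lines and
passing through the two boundary points `[u:0:1]` and `[0:v:1]` (`u, v > 0`). -/
theorem unique_real_conic_tangent_to_coordinate_triangle_through_axis_points
    (u v : ℝ) (hu : 0 < u) (hv : 0 < v) :
    ∃ S : Finset (Fin 6 → ℝ), S.card = 1 ∧
      (∀ c ∈ S, c ≠ 0 ∧ SmoothConic c ∧ TangentX c ∧ TangentY c ∧ TangentZ c ∧
        Qval c u 0 1 = 0 ∧ Qval c 0 v 1 = 0) ∧
      (∀ c : Fin 6 → ℝ,
        (c ≠ 0 ∧ SmoothConic c ∧ TangentX c ∧ TangentY c ∧ TangentZ c ∧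
          Qval c u 0 1 = 0 ∧ Qval c 0 v 1 = 0) →
        ∃ c' ∈ S, ∃ r : ℝ, r ≠ 0 ∧ c = r • c') ∧
      (∀ c ∈ S, ∀ c' ∈ S, (∃ r : ℝ, r ≠ 0 ∧ c = r • c') → c = c') := by
  refine ⟨{inscribedConic u v}, Finset.card_singleton _, ?_, ?_, ?_⟩
  · intro c hc
    rw [Finset.mem_singleton.1 hc]
    exact isInscribedConicThrough_inscribedConic hu.ne' hv.ne'
  · rintro c ⟨hc0, hsmooth, hX, hY, hZ, hQu, hQv⟩
    obtain ⟨r, hr | hr⟩ := eq_smul_inscribedConic_or_doubleLine hv.ne' hX hY hZ hQu hQv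
    · refine ⟨_, Finset.mem_singleton_self _, r, ?_, hr⟩
      rintro rfl
      exact hc0 (by rw [hr, zero_smul])
    · exact absurd (hr ▸ hsmooth) (not_smoothConic_smul_doubleLine r u v)
  · simp
end
end
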